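/- Let G be a connected graph of order n ≥ 2 and let K_{n'} be the complete graph of order n' ≥ 2. For any vertex v of K_{n'}, the strong metric dimension of the rooted product graph satisfies dim_s(G∘_v K_{n'}) = n(n' − 1) − 1. -/

import Mathlib

/-!
Distances in `G ∘_v H` are explicit: inside a copy of `H` they are distances of `H`, and between
two copies they run through the two roots. In `G ∘_v K_{n'}` any two distinct non-root vertices
are mutually maximally distant, and only the two vertices of such a pair strongly resolve it, so a
strong metric generator misses at most one of the `n (n' - 1)` non-root vertices. Conversely,
since a root lies on every geodesic leaving its copy, all non-root vertices but one already form a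
strong metric generator.
-/

namespace RootedStrong

variable {V : Type*}

/-- `u` is maximally distant from `v`: every neighbor `w` of `u` satisfies `d(v,w) ≤ d(u,v)`. -/
def MaxDistant (G : SimpleGraph V) (u v : V) : Prop :=
  ∀ w, G.Adj u w → G.dist v w ≤ G.dist u v

/-- `u` and `v` are mutually maximally distant. -/
def MMD (G : SimpleGraph V) (u v : V) : Prop :=
  MaxDistant G u v ∧ MaxDistant G v u

/-- The boundary `∂(G)` of a graph. -/
def boundary (G : SimpleGraph V) : Set V := {u | ∃ v, MMD G u v}

/-- A vertex is simplicial if its neighborhood induces a complete graph. -/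
def Simplicial (G : SimpleGraph V) (u : V) : Prop :=
  ∀ x ∈ G.neighborSet u, ∀ y ∈ G.neighborSet u, x ≠ y → G.Adj x y

/-- The set `σ(G)` of simplicial vertices. -/
def simplicialSet (G : SimpleGraph V) : Set V := {u | Simplicial G u}

/-- `w` strongly resolves `u` and `v`. -/
def StronglyResolves (G : SimpleGraph V) (w u v : V) : Prop :=
  G.dist w u = G.dist w v + G.dist v u ∨ G.dist w v = G.dist w u + G.dist u v

/-- A set of vertices is a strong metric generator if every pair of distinct vertices is
strongly resolved by some of its elements. -/
def IsStrongGenerator (G : SimpleGraph V) (S : Set V) : Prop :=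
  ∀ u v : V, u ≠ v → ∃ w ∈ S, StronglyResolves G w u v

/-- The strong metric dimension of a graph. -/
noncomputable def sdim (G : SimpleGraph V) [Fintype V] : ℕ :=
  sInf {n | ∃ S : Finset V, S.card = n ∧ IsStrongGenerator G (S : Set V)}

/-- A strong metric basis: a strong metric generator of minimum cardinality. -/
def IsStrongBasis (G : SimpleGraph V) [Fintype V] (S : Finset V) : Prop :=
  IsStrongGenerator G (S : Set V) ∧ S.card = sdim G

/-- The rooted product graph `G ∘_v H`. -/
def rootedProd {α β : Type*} (G : SimpleGraph α) (H : SimpleGraph β) (v : β) :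
    SimpleGraph (α × β) where
  Adj p q := (p.1 = q.1 ∧ H.Adj p.2 q.2) ∨ (p.2 = v ∧ q.2 = v ∧ G.Adj p.1 q.1)
  symm := ⟨by
    rintro ⟨a, x⟩ ⟨b, y⟩ (⟨h1, h2⟩ | ⟨h1, h2, h3⟩)
    · exact Or.inl ⟨h1.symm, h2.symm⟩
    · exact Or.inr ⟨h2, h1, h3.symm⟩⟩
  loopless := ⟨by
    rintro ⟨a, x⟩ (⟨_, h2⟩ | ⟨_, _, h3⟩)
    · exact H.loopless.irrefl _ h2
    · exact G.loopless.irrefl _ h3⟩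

/-- Two distinct vertices are true twins if they have equal closed neighborhoods. -/
def TrueTwins (G : SimpleGraph V) (x y : V) : Prop :=
  x ≠ y ∧ ∀ z, (z = x ∨ G.Adj x z) ↔ (z = y ∨ G.Adj y z)

/-- A twin-free clique: a clique containing no pair of true twins. -/
def IsTwinFreeClique (G : SimpleGraph V) (X : Set V) : Prop :=
  (∀ x ∈ X, ∀ y ∈ X, x ≠ y → G.Adj x y) ∧ ∀ x ∈ X, ∀ y ∈ X, ¬ TrueTwins G x y

/-- The twin-free clique number `ϖ(G)`. -/
noncomputable def twinFreeCliqueNum (G : SimpleGraph V) : ℕ :=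
  sSup {n | ∃ X : Set V, IsTwinFreeClique G X ∧ X.ncard = n}


open SimpleGraph

section StrongResolution

variable {G : SimpleGraph V} {u v w : V}

lemma stronglyResolves_self_left (G : SimpleGraph V) (u v : V) : StronglyResolves G u u v :=
  Or.inr (by rw [dist_self, zero_add])

lemma StronglyResolves.symm (h : StronglyResolves G w u v) : StronglyResolves G w v u :=
  Or.symm h

lemma isStrongGenerator_univ (G : SimpleGraph V) : IsStrongGenerator G Set.univ :=
  fun u v _ => ⟨u, trivial, stronglyResolves_self_left G u v⟩

/-- The first step of a geodesic from `u` to `w` gets closer to `w` without getting farther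
from `v`, so `u` cannot lie on a geodesic from `w` to `v` unless `w = u`. -/
lemma MaxDistant.eq_of_dist_eq_add (hG : G.Connected) (h : MaxDistant G u v)
    (hw : G.dist w v = G.dist w u + G.dist u v) : w = u := by
  by_contra hwu
  obtain ⟨W, hW⟩ := hG.exists_walk_length_eq_dist u w
  cases W with
  | nil => exact hwu rfl
  | @cons _ c _ huc W =>
    have hcw : G.dist c w ≤ W.length := dist_le W
    have hvc : G.dist v c ≤ G.dist u v := h c huc
    have htri : G.dist w v ≤ G.dist c w + G.dist v c := by
      rw [dist_comm (u := c), dist_comm (u := v)]; exact hG.dist_triangle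
    rw [Walk.length_cons, dist_comm] at hW
    omega

lemma MMD.eq_or_eq_of_stronglyResolves (hG : G.Connected) (h : MMD G u v)
    (hw : StronglyResolves G w u v) : w = u ∨ w = v :=
  hw.symm.imp (h.1.eq_of_dist_eq_add hG) (h.2.eq_of_dist_eq_add hG)

lemma IsStrongGenerator.mem_or_mem_of_mmd {S : Set V} (hG : G.Connected)
    (hS : IsStrongGenerator G S) (huv : u ≠ v) (h : MMD G u v) : u ∈ S ∨ v ∈ S := by
  obtain ⟨w, hwS, hw⟩ := hS u v huv
  rcases h.eq_or_eq_of_stronglyResolves hG hw with rfl | rfl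
  · exact Or.inl hwS
  · exact Or.inr hwS

lemma sdim_le_card [Fintype V] {S : Finset V} (hS : IsStrongGenerator G S) :
    sdim G ≤ S.card :=
  Nat.sInf_le ⟨S, rfl, hS⟩

lemma card_le_sdim_add_one [Fintype V] (hG : G.Connected) {T : Finset V}
    (hT : (T : Set V).Pairwise (MMD G)) : T.card ≤ sdim G + 1 := by
  classical
  have hnonempty : {n | ∃ S : Finset V, S.card = n ∧ IsStrongGenerator G S}.Nonempty :=
    ⟨_, Finset.univ, rfl, by simpa using isStrongGenerator_univ G⟩
  obtain ⟨S, hS, hgen⟩ : ∃ S : Finset V, S.card = sdim G ∧ IsStrongGenerator G S :=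
    Nat.sInf_mem hnonempty
  have hout : (T \ S).card ≤ 1 := Finset.card_le_one.2 fun u hu u' hu' => by
    by_contra hne
    rw [Finset.mem_sdiff] at hu hu'
    rcases hgen.mem_or_mem_of_mmd hG hne (hT hu.1 hu'.1 hne) with h | h
    · exact hu.2 h
    · exact hu'.2 h
  have := Finset.card_le_card_sdiff_add_card (s := T) (t := S)
  omega

end StrongResolution

section RootedProduct

variable {α β : Type*} {G : SimpleGraph α} {H : SimpleGraph β} {v : β}

open Classical in
noncomputable def rootedDist (G : SimpleGraph α) (H : SimpleGraph β) (v : β) (p q : α × β) : ℕ :=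
  if p.1 = q.1 then H.dist p.2 q.2 else H.dist p.2 v + G.dist p.1 q.1 + H.dist v q.2

lemma rootedDist_mk_self (a : α) (x y : β) : rootedDist G H v (a, x) (a, y) = H.dist x y :=
  if_pos rfl

lemma rootedDist_mk_of_ne {a b : α} (hab : a ≠ b) (x y : β) :
    rootedDist G H v (a, x) (b, y) = H.dist x v + G.dist a b + H.dist v y :=
  if_neg hab

def fibreHom (G : SimpleGraph α) (v : β) (a : α) : H →g rootedProd G H v where
  toFun x := (a, x)
  map_rel' h := Or.inl ⟨rfl, h⟩

def rootHom (G : SimpleGraph α) (H : SimpleGraph β) (v : β) : G →g rootedProd G H v where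
  toFun a := (a, v)
  map_rel' h := Or.inr ⟨rfl, rfl, h⟩

lemma exists_walk_fibre (hH : H.Connected) (a : α) (x y : β) :
    ∃ W : (rootedProd G H v).Walk (a, x) (a, y), W.length = H.dist x y := by
  obtain ⟨P, hP⟩ := hH.exists_walk_length_eq_dist x y
  exact ⟨(P.map (fibreHom G v a)).copy (u' := (a, x)) (v' := (a, y)) rfl rfl,
    (Walk.length_copy _ _ _).trans ((Walk.length_map _ _).trans hP)⟩

lemma exists_walk_root (hG : G.Connected) (a b : α) :
    ∃ W : (rootedProd G H v).Walk (a, v) (b, v), W.length = G.dist a b := by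
  obtain ⟨P, hP⟩ := hG.exists_walk_length_eq_dist a b
  exact ⟨(P.map (rootHom G H v)).copy (u' := (a, v)) (v' := (b, v)) rfl rfl,
    (Walk.length_copy _ _ _).trans ((Walk.length_map _ _).trans hP)⟩

lemma exists_walk_length_eq_rootedDist (hG : G.Connected) (hH : H.Connected) (p q : α × β) :
    ∃ W : (rootedProd G H v).Walk p q, W.length = rootedDist G H v p q := by
  obtain ⟨a, x⟩ := p
  obtain ⟨b, y⟩ := q
  by_cases hab : a = b
  · subst hab
    obtain ⟨W, hW⟩ := exists_walk_fibre (G := G) (v := v) hH a x y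
    exact ⟨W, by rw [hW, rootedDist_mk_self]⟩
  · obtain ⟨P, hP⟩ := exists_walk_fibre (G := G) (v := v) hH a x v
    obtain ⟨Q, hQ⟩ := exists_walk_root (H := H) (v := v) hG a b
    obtain ⟨R, hR⟩ := exists_walk_fibre (G := G) (v := v) hH b v y
    refine ⟨P.append (Q.append R), ?_⟩
    rw [Walk.length_append, Walk.length_append, hP, hQ, hR, rootedDist_mk_of_ne hab, add_assoc]

lemma rootedDist_le_rootedDist_add_one {p p' : α × β} (q : α × β)
    (h : (rootedProd G H v).Adj p p') :
    rootedDist G H v p q ≤ rootedDist G H v p' q + 1 := by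
  obtain ⟨a, x⟩ := p
  obtain ⟨a', x'⟩ := p'
  obtain ⟨b, y⟩ := q
  rcases h with ⟨rfl, hxx'⟩ | ⟨hx, hx', haa'⟩
  · replace hxx' : H.Adj x x' := hxx'
    have hxy := hxx'.reachable.dist_triangle_left y
    have hxv := hxx'.reachable.dist_triangle_left v
    rw [dist_eq_one_iff_adj.2 hxx'] at hxy hxv
    by_cases hab : a = b
    · subst hab
      rw [rootedDist_mk_self, rootedDist_mk_self]
      omega
    · rw [rootedDist_mk_of_ne hab, rootedDist_mk_of_ne hab]
      omega
  · replace haa' : G.Adj a a' := haa'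
    replace hx : x = v := hx
    replace hx' : x' = v := hx'
    subst x x'
    by_cases hab : a = b
    · subst hab
      rw [rootedDist_mk_self, rootedDist_mk_of_ne haa'.ne.symm]
      omega
    by_cases ha'b : a' = b
    · subst ha'b
      rw [rootedDist_mk_of_ne hab, rootedDist_mk_self, SimpleGraph.dist_self,
        dist_eq_one_iff_adj.2 haa']
      omega
    · have hab' := haa'.reachable.dist_triangle_left b
      rw [dist_eq_one_iff_adj.2 haa'] at hab'
      rw [rootedDist_mk_of_ne hab, rootedDist_mk_of_ne ha'b, SimpleGraph.dist_self]
      omega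

lemma rootedDist_le_length {p q : α × β} (W : (rootedProd G H v).Walk p q) :
    rootedDist G H v p q ≤ W.length := by
  induction W with
  | nil => simp [rootedDist]
  | cons h W ih =>
    rw [Walk.length_cons]
    exact (rootedDist_le_rootedDist_add_one _ h).trans (by omega)

theorem dist_rootedProd (hG : G.Connected) (hH : H.Connected) (p q : α × β) :
    (rootedProd G H v).dist p q = rootedDist G H v p q := by
  obtain ⟨W, hW⟩ := exists_walk_length_eq_rootedDist (v := v) hG hH p q
  obtain ⟨W', hW'⟩ := Reachable.exists_walk_length_eq_dist ⟨W⟩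
  exact le_antisymm (hW ▸ dist_le W) (hW' ▸ rootedDist_le_length W')

lemma connected_rootedProd (hG : G.Connected) (hH : H.Connected) :
    (rootedProd G H v).Connected :=
  have : Nonempty α := hG.nonempty
  have : Nonempty β := hH.nonempty
  (connected_iff _).2 ⟨fun p q => ⟨(exists_walk_length_eq_rootedDist hG hH p q).choose⟩,
    inferInstance⟩

lemma dist_rootedProd_eq_dist_root_add (hG : G.Connected) (hH : H.Connected) {a b : α}
    (hab : a ≠ b) (x y : β) :
    (rootedProd G H v).dist (a, x) (b, y) =
      (rootedProd G H v).dist (a, x) (a, v) + (rootedProd G H v).dist (a, v) (b, y) := by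
  simp only [dist_rootedProd hG hH, rootedDist_mk_self, rootedDist_mk_of_ne hab, dist_self]
  omega

lemma stronglyResolves_rootedProd_root (hG : G.Connected) (hH : H.Connected) {a b : α}
    (hab : a ≠ b) (x y : β) :
    StronglyResolves (rootedProd G H v) (a, x) (a, v) (b, y) :=
  Or.inr (dist_rootedProd_eq_dist_root_add hG hH hab x y)

lemma stronglyResolves_rootedProd_root' (hG : G.Connected) (hH : H.Connected) {a b : α}
    (hab : a ≠ b) (x y : β) :
    StronglyResolves (rootedProd G H v) (b, y) (a, v) (a, x) := by
  refine Or.inr ?_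
  rw [dist_comm, dist_rootedProd_eq_dist_root_add hG hH hab, add_comm, dist_comm,
    dist_comm (u := (a, x))]

end RootedProduct

section CompleteFibres

variable {α β : Type*} {G : SimpleGraph α} {v : β}

lemma connected_top_of_elem (v : β) : (⊤ : SimpleGraph β).Connected :=
  @connected_top β ⟨v⟩

lemma dist_top_le_one (x y : β) : (⊤ : SimpleGraph β).dist x y ≤ 1 := by
  by_cases h : x = y
  · simp [h]
  · simp [dist_top_of_ne h]

lemma maxDistant_rootedProd_top (hG : G.Connected) {p q : α × β} (hp : p.2 ≠ v) (hq : q.2 ≠ v)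
    (hpq : p ≠ q) : MaxDistant (rootedProd G ⊤ v) p q := by
  obtain ⟨a, x⟩ := p
  obtain ⟨b, y⟩ := q
  rintro ⟨a', z⟩ hw
  obtain rfl : a = a' := (hw.resolve_right fun h => hp h.1).1
  simp only [dist_rootedProd hG (connected_top_of_elem v)]
  by_cases hab : a = b
  · subst hab
    have hxy : x ≠ y := fun h => hpq (h ▸ rfl)
    rw [rootedDist_mk_self, rootedDist_mk_self, dist_top_of_ne hxy]
    exact dist_top_le_one y z
  · have hz := dist_top_le_one v z
    rw [rootedDist_mk_of_ne (Ne.symm hab), rootedDist_mk_of_ne hab, dist_top_of_ne hp,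
      dist_top_of_ne hq, dist_top_of_ne hq.symm, dist_comm (u := b)]
    omega

variable [Fintype α] [Fintype β] [DecidableEq β]

variable (α) in
def nonroots (v : β) : Finset (α × β) := Finset.univ ×ˢ Finset.univ.erase v

@[simp]
lemma mem_nonroots {p : α × β} : p ∈ nonroots α v ↔ p.2 ≠ v := by
  simp [nonroots]

lemma card_nonroots : (nonroots α v).card = Fintype.card α * (Fintype.card β - 1) := by
  rw [nonroots, Finset.card_product, Finset.card_erase_of_mem (Finset.mem_univ v),
    Finset.card_univ, Finset.card_univ]

lemma pairwise_mmd_nonroots (hG : G.Connected) :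
    (nonroots α v : Set (α × β)).Pairwise (MMD (rootedProd G ⊤ v)) := by
  intro p hp q hq hpq
  rw [Finset.mem_coe, mem_nonroots] at hp hq
  exact ⟨maxDistant_rootedProd_top hG hp hq hpq, maxDistant_rootedProd_top hG hq hp hpq.symm⟩

/-- A root `(a, v)` is resolved from outside its copy by a non-root vertex of that copy, and from
inside by a non-root vertex of another copy; the copy `b₀` serves when the former is `(a₀, y₀)`. -/
lemma isStrongGenerator_nonroots_erase [DecidableEq α] (hG : G.Connected) {a₀ b₀ : α}
    (hab : a₀ ≠ b₀) {y₀ : β} (hy₀ : y₀ ≠ v) :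
    IsStrongGenerator (rootedProd G ⊤ v) ((nonroots α v).erase (a₀, y₀) : Set (α × β)) := by
  have hK := connected_top_of_elem v
  set S := (nonroots α v).erase (a₀, y₀)
  have hmem : ∀ {a : α}, a ≠ a₀ → (a, y₀) ∈ (S : Set (α × β)) := fun ha => by
    simp [S, ha, hy₀]
  have hout : ∀ p, p ∉ (S : Set (α × β)) → p = (a₀, y₀) ∨ p.2 = v := fun p hp => by
    simp only [S, Finset.coe_erase, Set.mem_sdiff, Finset.mem_coe, mem_nonroots,
      Set.mem_singleton_iff, not_and, not_not] at hp
    tauto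
  have hroot : ∀ (a : α) (q : α × β), q = (a₀, y₀) ∨ q.2 = v → q ≠ (a, v) →
      ∃ w ∈ (S : Set (α × β)), StronglyResolves (rootedProd G ⊤ v) w (a, v) q := by
    rintro a ⟨b, y⟩ hq hne
    by_cases ha : a = a₀
    · subst ha
      rcases hq with hq | hq
      · rw [hq]
        exact ⟨(b₀, y₀), hmem hab.symm, stronglyResolves_rootedProd_root' hG hK hab y₀ y₀⟩
      · replace hq : y = v := hq
        subst hq
        have hb : b ≠ a := fun h => hne (h ▸ rfl)
        exact ⟨(b, y₀), hmem hb, (stronglyResolves_rootedProd_root hG hK hb y₀ y).symm⟩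
    · have hb : a ≠ b := by
        rintro rfl
        rcases hq with hq | hq
        · exact ha (Prod.ext_iff.1 hq).1
        · exact hne (Prod.ext rfl hq)
      exact ⟨(a, y₀), hmem ha, stronglyResolves_rootedProd_root hG hK hb y₀ y⟩
  intro p q hpq
  by_cases hp : p ∈ (S : Set (α × β))
  · exact ⟨p, hp, stronglyResolves_self_left _ p q⟩
  by_cases hq : q ∈ (S : Set (α × β))
  · exact ⟨q, hq, (stronglyResolves_self_left _ q p).symm⟩
  rcases hout p hp with rfl | hpv
  · rcases hout q hq with rfl | hqv
    · exact absurd rfl hpq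
    · obtain ⟨b, y⟩ := q
      replace hqv : y = v := hqv
      subst hqv
      obtain ⟨w, hw, hres⟩ := hroot b _ (Or.inl rfl) hpq
      exact ⟨w, hw, hres.symm⟩
  · obtain ⟨a, x⟩ := p
    replace hpv : x = v := hpv
    subst hpv
    exact hroot a q (hout q hq) hpq.symm

end CompleteFibres

theorem statement6 {α β : Type*} [Fintype α] [Fintype β]
    (G : SimpleGraph α) (hG : G.Connected)
    {n n' : ℕ} (hn : Fintype.card α = n) (h2 : 2 ≤ n)
    (hn' : Fintype.card β = n') (h2' : 2 ≤ n') (v : β) :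
    (sdim (rootedProd G (⊤ : SimpleGraph β) v) : ℤ) = n * ((n' : ℤ) - 1) - 1 := by
  classical
  have hK := connected_top_of_elem v
  obtain ⟨a₀, b₀, hab⟩ := Fintype.exists_pair_of_one_lt_card (show 1 < Fintype.card α by omega)
  obtain ⟨y₀, hy₀⟩ := Fintype.exists_ne_of_one_lt_card (show 1 < Fintype.card β by omega) v
  have hcard : (nonroots α v).card = n * (n' - 1) := by rw [card_nonroots, hn, hn']
  have hupper := sdim_le_card (isStrongGenerator_nonroots_erase hG hab hy₀)
  rw [Finset.card_erase_of_mem (by simpa using hy₀), hcard] at hupper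
  have hlower :=
    card_le_sdim_add_one (connected_rootedProd hG hK) (pairwise_mmd_nonroots (v := v) hG)
  rw [hcard] at hlower
  have hpos : 0 < n * (n' - 1) := Nat.mul_pos (by omega) (by omega)
  have hsdim : sdim (rootedProd G ⊤ v) + 1 = n * (n' - 1) := by omega
  have := congrArg (Nat.cast : ℕ → ℤ) hsdim
  push_cast [Nat.cast_sub (show 1 ≤ n' by omega)] at this
  linarith

end RootedStrong
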